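/- arXiv:2405.12714 — 2 statements merged into one kernel-verified Lean document; each statement's English description precedes it below -/
import Mathlib

section
/- Let j > k ≥ 0 be natural numbers. Then the sum over all r ≥ 0 and all tuples (k_1, ..., k_r) of nonnegative integers with r = j - k and k_1 + ... + k_r = k of the product C(k_1)·C(k_2)···C(k_r) of Catalan numbers equals ((j-k)/(j+k))·binomial(j+k, k). -/
open PowerSeries Finset

noncomputable def catGF : PowerSeries ℚ := PowerSeries.mk fun n => (catalan n : ℚ)

lemma catGF_eq : catGF = 1 + X * catGF ^ 2 := by
  ext n
  cases n with
  | zero => simp [catGF]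
  | succ n =>
    rw [map_add, coeff_succ_X_mul, sq, coeff_mul]
    simp only [catGF, coeff_mk, PowerSeries.coeff_one, Nat.succ_ne_zero, if_false, zero_add]
    rw [catalan_succ' n]
    push_cast
    rfl

lemma sum_eq_coeff (r n : ℕ) :
    (∑ f ∈ Finset.Nat.antidiagonalTuple r n, ∏ i, (catalan (f i) : ℚ))
      = PowerSeries.coeff n (catGF ^ r) := by
  induction r generalizing n with
  | zero =>
    cases n with
    | zero => simp [Finset.Nat.antidiagonalTuple_zero_zero]
    | succ n => simp [Finset.Nat.antidiagonalTuple_zero_succ]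
  | succ r ih =>
    rw [pow_succ', coeff_mul]
    simp only [← ih]
    simp only [catGF, coeff_mk]
    simp_rw [Finset.mul_sum]
    rw [Finset.sum_sigma']
    refine (Finset.sum_nbij' (fun x => Fin.cons x.1.1 x.2)
      (fun f => ⟨(f 0, ∑ i, Fin.tail f i), Fin.tail f⟩) ?_ ?_ ?_ ?_ ?_).symm
    · rintro ⟨⟨a, b⟩, f⟩ h
      simp only [Finset.mem_sigma, Finset.mem_antidiagonal,
        Finset.Nat.mem_antidiagonalTuple] at h
      rw [Finset.Nat.mem_antidiagonalTuple, Fin.sum_cons, h.2]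
      simpa using h.1
    · intro f hf
      rw [Finset.Nat.mem_antidiagonalTuple] at hf
      simp only [Finset.mem_sigma, Finset.mem_antidiagonal,
        Finset.Nat.mem_antidiagonalTuple]
      constructor
      · rw [← hf, Fin.sum_univ_succ]
        simp [Fin.tail]
      · trivial
    · rintro ⟨⟨a, b⟩, f⟩ h
      simp only [Finset.mem_sigma, Finset.mem_antidiagonal,
        Finset.Nat.mem_antidiagonalTuple] at h
      simp [Fin.tail_cons, h.2]
    · intro f hf
      simp [Fin.cons_self_tail]
    · rintro ⟨⟨a, b⟩, f⟩ h
      simp [Fin.prod_univ_succ, Fin.tail_cons]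

/-- closed form -/
noncomputable def Gb (r n : ℕ) : ℚ :=
  if n = 0 then 1 else ((2 * n + r - 1).choose n : ℚ) - ((2 * n + r - 1).choose (n - 1) : ℚ)

lemma Gb_rec (r n : ℕ) : Gb r (n + 1) + Gb (r + 2) n = Gb (r + 1) (n + 1) := by
  cases n with
  | zero =>
    simp only [Gb, if_pos rfl, Nat.one_ne_zero, if_false]
    have e1 : 2 * 1 + r - 1 = r + 1 := by omega
    have e2 : 2 * 1 + (r + 1) - 1 = r + 2 := by omega
    rw [e1, e2]
    simp [Nat.choose_one_right]
    ring
  | succ m =>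
    simp only [Gb, Nat.succ_ne_zero, if_false]
    have e1 : 2 * (m + 1 + 1) + r - 1 = 2 * m + r + 3 := by omega
    have e2 : 2 * (m + 1) + (r + 2) - 1 = 2 * m + r + 3 := by omega
    have e3 : 2 * (m + 1 + 1) + (r + 1) - 1 = 2 * m + r + 4 := by omega
    have e4 : m + 1 + 1 - 1 = m + 1 := rfl
    have e5 : m + 1 - 1 = m := rfl
    rw [e1, e2, e3, e4, e5]
    have p1 : (2 * m + r + 4).choose (m + 2) =
        (2 * m + r + 3).choose (m + 1) + (2 * m + r + 3).choose (m + 2) :=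
      Nat.choose_succ_succ _ _
    have p2 : (2 * m + r + 4).choose (m + 1) =
        (2 * m + r + 3).choose m + (2 * m + r + 3).choose (m + 1) :=
      Nat.choose_succ_succ _ _
    rw [p1, p2]
    push_cast
    ring

lemma coeff_pow_catGF (n : ℕ) : ∀ r, PowerSeries.coeff n (catGF ^ r) = Gb r n := by
  induction n with
  | zero =>
    intro r
    rw [coeff_zero_eq_constantCoeff, map_pow]
    have h : constantCoeff catGF = 1 := by
      rw [← coeff_zero_eq_constantCoeff]; simp [catGF]
    rw [h, one_pow]
    simp [Gb]
  | succ n ihn =>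
    intro r
    induction r with
    | zero =>
      simp only [pow_zero, PowerSeries.coeff_one, Nat.succ_ne_zero, if_false, Gb]
      have e1 : 2 * (n + 1) + 0 - 1 = 2 * n + 1 := by omega
      have e2 : n + 1 - 1 = n := rfl
      rw [e1, e2, Nat.choose_symm_half]
      simp
    | succ r ihr =>
      have key : catGF ^ (r + 1) = catGF ^ r + X * catGF ^ (r + 2) := by
        calc catGF ^ (r+1) = catGF ^ r * catGF := by ring
        _ = catGF ^ r * (1 + X * catGF ^ 2) := by rw [← catGF_eq]
        _ = catGF ^ r + X * catGF ^ (r + 2) := by ring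
      rw [key, map_add, coeff_succ_X_mul, ihr, ihn, Gb_rec]

/-- The sum over tuples `(k_1, ..., k_r)` of nonnegative integers with `r = j - k` and
`k_1 + ⋯ + k_r = k` of the products of Catalan numbers equals
`((j-k)/(j+k)) * choose (j+k) k`. -/
theorem sum_prod_catalan_eq (j k : ℕ) (hjk : k < j) :
    (∑ f ∈ Finset.Nat.antidiagonalTuple (j - k) k,
        ∏ i, (catalan (f i) : ℚ)) =
      ((j : ℚ) - k) / ((j : ℚ) + k) * ((j + k).choose k : ℚ) := by
  rw [sum_eq_coeff, coeff_pow_catGF]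
  cases k with
  | zero =>
    have hj : (j : ℚ) ≠ 0 := Nat.cast_ne_zero.mpr (by omega)
    simp [Gb, div_self hj]
  | succ m =>
    simp only [Gb, Nat.succ_ne_zero, if_false]
    have e1 : 2 * (m + 1) + (j - (m + 1)) - 1 = j + m := by omega
    have e2 : m + 1 - 1 = m := rfl
    rw [e1, e2]
    have p1 : (j + (m + 1)).choose (m + 1) = (j + m).choose m + (j + m).choose (m + 1) := by
      have : j + (m + 1) = (j + m) + 1 := by omega
      rw [this]; exact Nat.choose_succ_succ _ _
    have p2 : (j + m).choose (m + 1) * (m + 1) = (j + m).choose m * j := by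
      rw [Nat.choose_succ_right_eq]
      congr 1
      omega
    have hA : ((j + m).choose (m + 1) : ℚ) * (m + 1) = ((j + m).choose m : ℚ) * j := by
      exact_mod_cast congrArg (Nat.cast : ℕ → ℚ) p2
    have hden : (j : ℚ) + (m + 1) ≠ 0 := by
      have : (0:ℚ) < (j:ℚ) + (m+1) := by positivity
      linarith
    rw [p1]
    push_cast
    push_cast at hA
    rw [div_mul_eq_mul_div, eq_div_iff hden]
    linear_combination 2 * hA
end

section
/- For integers r ≥ 1 and k ≥ 0, the coefficient of x^k in the r-th power of the Catalan generating function G(x) = Σ_{n≥0} C(n) x^n equals (r/(2k+r))·binomial(2k+r, k). -/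
open PowerSeries

noncomputable def G : PowerSeries ℚ := PowerSeries.mk fun n => (catalan n : ℚ)

lemma hG : G = 1 + PowerSeries.X * G ^ 2 := by
  ext n
  cases n with
  | zero => simp [G]
  | succ n =>
      rw [map_add, PowerSeries.coeff_succ_X_mul]
      simp only [G, sq, PowerSeries.coeff_mul, PowerSeries.coeff_mk, PowerSeries.coeff_one]
      rw [catalan_succ' n]
      push_cast
      simp

lemma key (r k : ℕ) :
    PowerSeries.coeff (R := ℚ) (k+1) (G ^ (r+1)) =
      PowerSeries.coeff (R := ℚ) (k+1) (G ^ r) + PowerSeries.coeff (R := ℚ) k (G ^ (r+2)) := by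
  have h : G ^ (r+1) = G ^ r + PowerSeries.X * G ^ (r+2) := by
    rw [pow_succ]; nth_rewrite 2 [hG]; ring
  rw [h, map_add, PowerSeries.coeff_succ_X_mul]

lemma binid (r k : ℕ) :
    ((r:ℚ)+3)/(2*k+r+3) * ((2*k+r+3).choose k : ℚ) =
      ((r:ℚ)+2)/(2*k+r+4) * ((2*k+r+4).choose (k+1) : ℚ)
      - ((r:ℚ)+1)/(2*k+r+3) * ((2*k+r+3).choose (k+1) : ℚ) := by
  have hp : (2*k+r+4).choose (k+1) = (2*k+r+3).choose k + (2*k+r+3).choose (k+1) :=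
    Nat.choose_succ_succ (2*k+r+3) k
  have hb : (2*k+r+3).choose (k+1) * (k+1) = (2*k+r+3).choose k * (k+r+3) := by
    have h := Nat.choose_succ_right_eq (2*k+r+3) k
    have hsub : 2*k+r+3 - k = k+r+3 := by omega
    rwa [hsub] at h
  have hpq : ((2*k+r+4).choose (k+1) : ℚ)
      = ((2*k+r+3).choose k : ℚ) + ((2*k+r+3).choose (k+1) : ℚ) := by exact_mod_cast hp
  have hbq : ((2*k+r+3).choose (k+1):ℚ) * (k+1) = ((2*k+r+3).choose k:ℚ) * (k+r+3) := by
    exact_mod_cast hb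
  have hk1 : (k:ℚ)+1 ≠ 0 := by positivity
  have hb2 : ((2*k+r+3).choose (k+1):ℚ) = ((2*k+r+3).choose k:ℚ) * (k+r+3)/(k+1) := by
    field_simp; linarith [hbq]
  have h1 : (2*(k:ℚ)+r+3) ≠ 0 := by positivity
  have h2 : (2*(k:ℚ)+r+4) ≠ 0 := by positivity
  rw [hpq, hb2]
  field_simp
  ring

lemma aux : ∀ r k : ℕ, PowerSeries.coeff (R := ℚ) k (G ^ (r+1)) =
    ((r:ℚ)+1) / (2 * k + r + 1) * ((2 * k + r + 1).choose k : ℚ) := by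
  intro r
  induction r using Nat.twoStepInduction with
  | zero =>
      intro k
      have h := Nat.add_one_mul_choose_eq (2*k) k
      have h2 : (2*k+1).choose (k+1) = (2*k+1).choose k := Nat.choose_symm_half k
      rw [h2] at h
      simp only [zero_add, Nat.cast_zero, add_zero, pow_one, G, PowerSeries.coeff_mk]
      have hc : ((k:ℚ)+1) * catalan k = (2*k).choose k := by
        exact_mod_cast succ_mul_catalan_eq_centralBinom k
      have hq : ((2*k:ℕ)+1 : ℚ) * ((2*k).choose k : ℚ) = ((2*k+1).choose k : ℚ) * (k+1) := by
        exact_mod_cast h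
      push_cast at hq ⊢
      have hk1 : (k:ℚ)+1 ≠ 0 := by positivity
      have hk2 : (2*(k:ℚ)+1) ≠ 0 := by positivity
      field_simp
      nlinarith [hc, hq]
  | one =>
      intro k
      have hk := key 0 k
      simp only [pow_zero, pow_one] at hk
      rw [PowerSeries.coeff_one] at hk
      simp only [Nat.succ_ne_zero, if_false] at hk
      norm_num at hk
      have hG2 : PowerSeries.coeff (R := ℚ) k (G ^ 2) = (catalan (k+1) : ℚ) := by
        have hco : PowerSeries.coeff (R := ℚ) (k+1) G = (catalan (k+1) : ℚ) := by
          simp [G]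
        rw [hco] at hk; linarith
      rw [hG2]
      have hc : ((k:ℚ)+2) * catalan (k+1) = ((2*k+2).choose (k+1) : ℚ) := by
        have hn := succ_mul_catalan_eq_centralBinom (k+1)
        rw [Nat.centralBinom_eq_two_mul_choose, show 2*(k+1)=2*k+2 from by ring] at hn
        exact_mod_cast hn
      have hb : ((2*k+2).choose (k+1):ℚ) * (k+1) = ((2*k+2).choose k:ℚ) * (k+2) := by
        have h := Nat.choose_succ_right_eq (2*k+2) k
        have hsub : 2*k+2 - k = k+2 := by omega
        rw [hsub] at h
        exact_mod_cast h
      have hk1 : (k:ℚ)+1 ≠ 0 := by positivity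
      have hk2 : (k:ℚ)+2 ≠ 0 := by positivity
      have hk3 : (2*(k:ℚ)+1+1) ≠ 0 := by positivity
      have e1 : 2*k+1+1 = 2*k+2 := by ring
      rw [e1]
      push_cast
      field_simp
      nlinarith [hc, hb]
  | more r ih1 ih2 =>
      intro k
      have hk := key (r+1) k
      rw [ih1 (k+1), ih2 (k+1)] at hk
      have e : r+2+1 = r+1+2 := by ring
      rw [e]
      have e1 : 2*(k+1)+r+1 = 2*k+r+3 := by ring
      have e2 : 2*(k+1)+(r+1)+1 = 2*k+r+4 := by ring
      rw [e1, e2] at hk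
      have e3 : 2*k+(r+2)+1 = 2*k+r+3 := by ring
      rw [e3]
      push_cast at hk ⊢
      have hb := binid r k
      ring_nf at hk hb ⊢
      linarith [hk, hb]

/-- The coefficient of `x^k` in the `r`-th power of the Catalan generating function
equals `(r/(2k+r)) * choose (2k+r) k`. -/
theorem catalan_genfun_pow_coeff (r k : ℕ) (hr : 1 ≤ r) :
    PowerSeries.coeff (R := ℚ) k ((PowerSeries.mk fun n => (catalan n : ℚ)) ^ r) =
      (r : ℚ) / (2 * k + r) * ((2 * k + r).choose k : ℚ) := by
  obtain ⟨m, rfl⟩ := Nat.exists_eq_add_of_le hr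
  have h := aux m k
  have e : 1 + m = m + 1 := by ring
  rw [e]
  have e2 : 2*k + (m+1) = 2*k + m + 1 := by ring
  rw [e2]
  push_cast
  rw [show (PowerSeries.mk fun n => (catalan n : ℚ)) = G from rfl]
  ring_nf at h ⊢
  linarith [h]
end
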